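/- Let A be the (possibly weighted, loops allowed) adjacency matrix of a finite simple connected graph G on n vertices. Let λ ∈ ℝ and u ∈ ℝⁿ be such that u has at least two entries of opposite signs and Au ≥ λu componentwise. Let ℓ' be the number of eigenvalues of A (counted with multiplicity) that are strictly greater than λ. Then u induces at most ℓ' positive weak nodal domains on G. -/

import Mathlib

/-!
If `u` had more positive weak nodal domains than `A` has eigenvalues above `λ`, some
nontrivial combination `x = ∑ c_S u|_S` of the restrictions of `u` to its domains would be
orthogonal to every eigenvector with eigenvalue above `λ`; then `xᵀ(A - λ)x ≤ 0`, with equality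
only if `Ax = λx`. On the other hand distinct domains are not adjacent, and at a vertex of a
domain `S` every neighbour outside `S` is negative, so `A u|_S ≥ Au ≥ λu` there; hence
`xᵀ(A - λ)x = ∑ c_S² u|_Sᵀ(A - λ)u|_S ≥ 0`. So `Ax = λx`, which forces `A u|_S = Au` on a
domain `S` with `c_S ≠ 0`: no edge leaves `S`. Since `u` is negative somewhere, `S` is a proper
nonempty vertex set, contradicting connectivity.
-/

open Matrix Finset

variable {n : ℕ}

def matGraph (A : Matrix (Fin n) (Fin n) ℝ) : SimpleGraph (Fin n) where
  Adj i j := i ≠ j ∧ (A i j ≠ 0 ∨ A j i ≠ 0)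
  symm := ⟨fun _ _ h => ⟨h.1.symm, h.2.symm⟩⟩
  loopless := ⟨fun _ h => h.1 rfl⟩

def IsPosWeakNodalDomain (G : SimpleGraph (Fin n)) (u : Fin n → ℝ)
    (S : Set (Fin n)) : Prop :=
  S ⊆ {i | 0 ≤ u i} ∧ (∃ i ∈ S, u i ≠ 0) ∧ (G.induce S).Connected ∧
    ∀ T : Set (Fin n), S ⊆ T → T ⊆ {i | 0 ≤ u i} → (G.induce T).Connected → T = S

theorem exists_ne_zero_sum_smul_eq_zero_of_finrank_lt_card {K V β : Type*} [DivisionRing K]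
    [AddCommGroup V] [Module K V] [FiniteDimensional K V] (v : β → V) {s : Finset β}
    (h : Module.finrank K V < #s) : ∃ c : β → K, ∑ b ∈ s, c b • v b = 0 ∧ ∃ b ∈ s, c b ≠ 0 :=
  not_linearIndepOn_finset_iff.1 fun hv => h.not_ge (by simpa using hv.fintype_card_le_finrank)

theorem Matrix.IsHermitian.mulVec_eq_smul_of_dotProduct_nonneg {ι : Type*} [Fintype ι]
    [DecidableEq ι] {A : Matrix ι ι ℝ} (hA : A.IsHermitian) {lam : ℝ} {x : ι → ℝ}
    (hx : ∀ i, lam < hA.eigenvalues i → ⇑(hA.eigenvectorBasis i) ⬝ᵥ x = 0)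
    (hq : 0 ≤ x ⬝ᵥ (A *ᵥ x - lam • x)) : A *ᵥ x = lam • x := by
  set U : Matrix ι ι ℝ := ↑hA.eigenvectorUnitary
  set y := star U *ᵥ x
  set z : ι → ℝ := fun i => (hA.eigenvalues i - lam) * y i
  have hy : ∀ i, y i = ⇑(hA.eigenvectorBasis i) ⬝ᵥ x := fun i => by
    simp [y, U, mulVec, dotProduct, star_eq_conjTranspose, conjTranspose_eq_transpose_of_trivial]
  have hUy : U *ᵥ y = x := by simp [y, U, mulVec_mulVec]
  have hAx : A *ᵥ x - lam • x = U *ᵥ z := by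
    have hz : diagonal hA.eigenvalues *ᵥ y - lam • y = z := by
      ext i; simp [mulVec_diagonal, z]; ring
    have hAU : A = U * diagonal hA.eigenvalues * star U := by simpa [U] using hA.spectral_theorem
    rw [← hz, mulVec_sub, mulVec_smul, hUy]
    congr 1
    conv_lhs => rw [hAU]
    rw [← mulVec_mulVec, ← mulVec_mulVec]
  have hxU : x ᵥ* U = y := by
    simp [y, star_eq_conjTranspose, conjTranspose_eq_transpose_of_trivial, mulVec_transpose]
  have hterm : ∀ i, (hA.eigenvalues i - lam) * y i ^ 2 ≤ 0 := fun i => by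
    rcases lt_or_ge lam (hA.eigenvalues i) with hlt | hle
    · simp [hy, hx i hlt]
    · exact mul_nonpos_of_nonpos_of_nonneg (sub_nonpos.2 hle) (sq_nonneg _)
  have hsum : x ⬝ᵥ (A *ᵥ x - lam • x) = ∑ i, (hA.eigenvalues i - lam) * y i ^ 2 := by
    rw [hAx, dotProduct_mulVec, hxU, dotProduct]
    exact sum_congr rfl fun i _ => by ring
  have hterm_eq : ∀ i ∈ univ, (hA.eigenvalues i - lam) * y i ^ 2 = 0 :=
    (sum_eq_zero_iff_of_nonpos fun i _ => hterm i).1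
      (le_antisymm (sum_nonpos fun i _ => hterm i) (hsum ▸ hq))
  have hz : z = 0 := by
    ext i
    rcases mul_eq_zero.1 (hterm_eq i (mem_univ i)) with h | h
    · simp [z, h]
    · simp [z, pow_eq_zero_iff two_ne_zero |>.1 h]
  rw [← sub_eq_zero, hAx, hz, mulVec_zero]

theorem mulVec_apply_eq_mulVec_indicator_add {ι : Type*} [Fintype ι] (A : Matrix ι ι ℝ)
    (u : ι → ℝ) (S : Set ι) (k : ι) :
    (A *ᵥ u) k = (A *ᵥ S.indicator u) k + ∑ j, A k j * Sᶜ.indicator u j := by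
  conv_lhs => rw [← S.indicator_self_add_compl u]
  rw [mulVec_add]
  rfl

namespace IsPosWeakNodalDomain

variable {G : SimpleGraph (Fin n)} {u : Fin n → ℝ} {S T : Set (Fin n)}

theorem mem_of_adj (hS : IsPosWeakNodalDomain G u S) {i j : Fin n} (hi : i ∈ S)
    (hij : G.Adj i j) (hj : 0 ≤ u j) : j ∈ S := by
  have hconn : (G.induce (S ∪ {i, j})).Connected :=
    SimpleGraph.connected_induce_union hS.2.2.1.preconnected
      (SimpleGraph.induce_pair_connected_of_adj hij).preconnected hi (by simp) hij
  have hnonneg : S ∪ {i, j} ⊆ {k | 0 ≤ u k} :=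
    Set.union_subset hS.1 (Set.insert_subset (hS.1 hi) (Set.singleton_subset_iff.2 hj))
  rw [← hS.2.2.2 _ Set.subset_union_left hnonneg hconn]
  simp

theorem eq_of_mem (hS : IsPosWeakNodalDomain G u S) (hT : IsPosWeakNodalDomain G u T)
    {k : Fin n} (hkS : k ∈ S) (hkT : k ∈ T) : S = T := by
  have hconn : (G.induce (S ∪ T)).Connected :=
    SimpleGraph.induce_union_connected hS.2.2.1.preconnected hT.2.2.1.preconnected ⟨k, hkS, hkT⟩
  have hnonneg : S ∪ T ⊆ {k | 0 ≤ u k} := Set.union_subset hS.1 hT.1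
  rw [← hS.2.2.2 _ Set.subset_union_left hnonneg hconn,
    hT.2.2.2 _ Set.subset_union_right hnonneg hconn]

variable {A : Matrix (Fin n) (Fin n) ℝ} {k j : Fin n}

theorem neg_of_apply_ne_zero (hS : IsPosWeakNodalDomain (matGraph A) u S) (hk : k ∈ S)
    (hj : j ∉ S) (hkj : A k j ≠ 0) : u j < 0 :=
  lt_of_not_ge fun hu => hj (hS.mem_of_adj hk ⟨fun h => hj (h ▸ hk), Or.inl hkj⟩ hu)

theorem mulVec_indicator_apply_eq_zero (hS : IsPosWeakNodalDomain (matGraph A) u S)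
    (hT : IsPosWeakNodalDomain (matGraph A) u T) (hST : S ≠ T) (hk : k ∈ S) :
    (A *ᵥ T.indicator u) k = 0 := by
  show ∑ j, A k j * T.indicator u j = 0
  refine sum_eq_zero fun j _ => ?_
  by_cases hjT : j ∈ T
  · have hjS : j ∉ S := fun hjS => hST (hS.eq_of_mem hT hjS hjT)
    by_cases hkj : A k j = 0
    · simp [hkj]
    · exact absurd (hT.1 hjT) (hS.neg_of_apply_ne_zero hk hjS hkj).not_ge
  · simp [hjT]

theorem mul_indicator_compl_nonpos (hnonneg : ∀ i j, 0 ≤ A i j)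
    (hS : IsPosWeakNodalDomain (matGraph A) u S) (hk : k ∈ S) (j : Fin n) :
    A k j * Sᶜ.indicator u j ≤ 0 := by
  by_cases hjS : j ∈ S
  · simp [hjS]
  by_cases hkj : A k j = 0
  · simp [hkj]
  rw [Set.indicator_of_mem (Set.mem_compl hjS)]
  exact mul_nonpos_of_nonneg_of_nonpos (hnonneg k j) (hS.neg_of_apply_ne_zero hk hjS hkj).le

theorem mulVec_apply_le_mulVec_indicator_apply (hnonneg : ∀ i j, 0 ≤ A i j)
    (hS : IsPosWeakNodalDomain (matGraph A) u S) (hk : k ∈ S) :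
    (A *ᵥ u) k ≤ (A *ᵥ S.indicator u) k := by
  rw [mulVec_apply_eq_mulVec_indicator_add A u S k]
  linarith [sum_nonpos (s := univ) fun j _ => hS.mul_indicator_compl_nonpos hnonneg hk j]

theorem mulVec_apply_lt_mulVec_indicator_apply (hnonneg : ∀ i j, 0 ≤ A i j)
    (hS : IsPosWeakNodalDomain (matGraph A) u S) (hk : k ∈ S) (hj : j ∉ S) (hkj : A k j ≠ 0) :
    (A *ᵥ u) k < (A *ᵥ S.indicator u) k := by
  have hneg : A k j * Sᶜ.indicator u j < 0 := by
    rw [Set.indicator_of_mem (Set.mem_compl hj)]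
    exact mul_neg_of_pos_of_neg ((hnonneg k j).lt_of_ne' hkj) (hS.neg_of_apply_ne_zero hk hj hkj)
  rw [mulVec_apply_eq_mulVec_indicator_add A u S k]
  linarith [sum_neg' (fun j _ => hS.mul_indicator_compl_nonpos hnonneg hk j)
    ⟨j, mem_univ j, hneg⟩]

end IsPosWeakNodalDomain

theorem Matrix.IsSymm.exists_apply_ne_zero_of_connected {A : Matrix (Fin n) (Fin n) ℝ}
    (hA : A.IsSymm) (hconn : (matGraph A).Connected) {S : Set (Fin n)} {k j : Fin n}
    (hk : k ∈ S) (hj : j ∉ S) : ∃ a ∈ S, ∃ b ∉ S, A a b ≠ 0 := by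
  obtain ⟨d, -, hd₁, hd₂⟩ := (hconn.preconnected k j).some.exists_boundary_dart S hk hj
  obtain ⟨-, h | h⟩ := d.adj
  · exact ⟨_, hd₁, _, hd₂, h⟩
  · exact ⟨_, hd₁, _, hd₂, hA.apply _ _ ▸ h⟩

section DomainCombination

variable {A : Matrix (Fin n) (Fin n) ℝ} {u : Fin n → ℝ} {s : Finset (Set (Fin n))}
  {S : Set (Fin n)} {k : Fin n}

theorem sum_smul_indicator_apply_of_mem {G : SimpleGraph (Fin n)}
    (hs : ∀ T ∈ s, IsPosWeakNodalDomain G u T) (c : Set (Fin n) → ℝ) (hS : S ∈ s) (hk : k ∈ S) :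
    (∑ T ∈ s, c T • T.indicator u) k = c S * u k := by
  rw [Finset.sum_apply, sum_eq_single_of_mem S hS fun T hT hTS => ?_]
  · simp [hk]
  · have hkT : k ∉ T := fun hkT => hTS ((hs T hT).eq_of_mem (hs S hS) hkT hk)
    simp [hkT]

theorem mulVec_sum_smul_indicator_apply_of_mem
    (hs : ∀ T ∈ s, IsPosWeakNodalDomain (matGraph A) u T) (c : Set (Fin n) → ℝ) (hS : S ∈ s)
    (hk : k ∈ S) :
    (A *ᵥ ∑ T ∈ s, c T • T.indicator u) k = c S * (A *ᵥ S.indicator u) k := by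
  rw [mulVec_sum, Finset.sum_apply, sum_eq_single_of_mem S hS fun T hT hTS => ?_]
  · simp [mulVec_smul]
  · rw [mulVec_smul, Pi.smul_apply,
      (hs S hS).mulVec_indicator_apply_eq_zero (hs T hT) (Ne.symm hTS) hk, smul_zero]

theorem dotProduct_mulVec_sub_smul_nonneg (hnonneg : ∀ i j, 0 ≤ A i j) {lam : ℝ}
    (hAu : ∀ i, lam * u i ≤ (A *ᵥ u) i) (hs : ∀ T ∈ s, IsPosWeakNodalDomain (matGraph A) u T)
    {c : Set (Fin n) → ℝ} {x : Fin n → ℝ} (hx : x = ∑ T ∈ s, c T • T.indicator u) :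
    0 ≤ x ⬝ᵥ (A *ᵥ x - lam • x) := by
  refine sum_nonneg fun k _ => show 0 ≤ x k * ((A *ᵥ x) k - lam * x k) from ?_
  subst hx
  by_cases h : ∃ S ∈ s, k ∈ S
  · obtain ⟨S, hS, hk⟩ := h
    rw [sum_smul_indicator_apply_of_mem hs c hS hk,
      mulVec_sum_smul_indicator_apply_of_mem hs c hS hk]
    have hSu := (hs S hS).mulVec_apply_le_mulVec_indicator_apply hnonneg hk
    calc 0 ≤ c S ^ 2 * (u k * ((A *ᵥ S.indicator u) k - lam * u k)) :=
          mul_nonneg (sq_nonneg _) (mul_nonneg ((hs S hS).1 hk) (by linarith [hAu k]))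
      _ = _ := by ring
  · push Not at h
    have hxk : (∑ T ∈ s, c T • T.indicator u) k = 0 := by
      simp only [Finset.sum_apply, Pi.smul_apply]
      exact sum_eq_zero fun T hT => by simp [Set.indicator_of_notMem (h T hT)]
    simp [hxk]

theorem apply_eq_zero_of_mulVec_eq_smul (hnonneg : ∀ i j, 0 ≤ A i j) {lam : ℝ}
    (hAu : ∀ i, lam * u i ≤ (A *ᵥ u) i) (hs : ∀ T ∈ s, IsPosWeakNodalDomain (matGraph A) u T)
    {c : Set (Fin n) → ℝ} {x : Fin n → ℝ} (hx : x = ∑ T ∈ s, c T • T.indicator u)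
    (hAx : A *ᵥ x = lam • x) (hS : S ∈ s) (hcS : c S ≠ 0) (hk : k ∈ S) {j : Fin n} (hj : j ∉ S) :
    A k j = 0 := by
  by_contra hkj
  have hxk := congrFun hAx k
  subst hx
  rw [mulVec_sum_smul_indicator_apply_of_mem hs c hS hk, Pi.smul_apply,
    sum_smul_indicator_apply_of_mem hs c hS hk, smul_eq_mul] at hxk
  have hSu : (A *ᵥ S.indicator u) k = lam * u k := mul_left_cancel₀ hcS (by rw [hxk]; ring)
  linarith [(hs S hS).mulVec_apply_lt_mulVec_indicator_apply hnonneg hk hj hkj, hAu k]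

end DomainCombination

theorem pos_weak_nodal_domains_bound_general (A : Matrix (Fin n) (Fin n) ℝ)
    (hA : A.IsHermitian) (hnonneg : ∀ i j, 0 ≤ A i j)
    (hconn : (matGraph A).Connected)
    (lam : ℝ) (u : Fin n → ℝ)
    (hneg : ∃ j, u j < 0)
    (hAu : ∀ i, lam * u i ≤ (A *ᵥ u) i) :
    {S : Set (Fin n) | IsPosWeakNodalDomain (matGraph A) u S}.ncard ≤
      (Finset.univ.filter (fun i => lam < hA.eigenvalues i)).card := by
  set D := (Set.toFinite {S | IsPosWeakNodalDomain (matGraph A) u S}).toFinset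
  have hD : ∀ S ∈ D, IsPosWeakNodalDomain (matGraph A) u S := by simp [D]
  rw [Set.ncard_eq_toFinset_card _ (Set.toFinite _)]
  by_contra! hlt
  obtain ⟨c, hc, S, hSD, hcS⟩ := exists_ne_zero_sum_smul_eq_zero_of_finrank_lt_card (s := D)
    (fun (T : Set (Fin n)) (i : {i // lam < hA.eigenvalues i}) =>
      ⇑(hA.eigenvectorBasis i) ⬝ᵥ T.indicator u)
    (by rwa [Module.finrank_fintype_fun_eq_card, Fintype.card_subtype])
  set x := ∑ T ∈ D, c T • T.indicator u with hx
  have hAx : A *ᵥ x = lam • x := hA.mulVec_eq_smul_of_dotProduct_nonneg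
    (fun i hi => by simpa [hx, dotProduct_sum, dotProduct_smul] using congrFun hc ⟨i, hi⟩)
    (dotProduct_mulVec_sub_smul_nonneg hnonneg hAu hD hx)
  obtain ⟨k, hk, -⟩ := (hD S hSD).2.1
  obtain ⟨j, hj⟩ := hneg
  have hsymm : A.IsSymm := by simpa [IsSymm, conjTranspose_eq_transpose_of_trivial] using hA
  obtain ⟨a, ha, b, hb, hab⟩ :=
    hsymm.exists_apply_ne_zero_of_connected hconn hk fun hjS => hj.not_ge ((hD S hSD).1 hjS)
  exact hab (apply_eq_zero_of_mulVec_eq_smul hnonneg hAu hD hx hAx hSD hcS ha hb)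

/-- Let `A` be the (possibly weighted, loops allowed) adjacency matrix of a finite
simple connected graph. If `u` has two entries of opposite signs and `Au ≥ λu`
componentwise, then `u` induces at most `ℓ'` positive weak nodal domains, where
`ℓ'` is the number of eigenvalues of `A` strictly greater than `λ`
(with multiplicity). -/
theorem pos_weak_nodal_domains_bound (A : Matrix (Fin n) (Fin n) ℝ)
    (hA : A.IsHermitian) (hnonneg : ∀ i j, 0 ≤ A i j)
    (hconn : (matGraph A).Connected)
    (lam : ℝ) (u : Fin n → ℝ)
    (hpos : ∃ i, 0 < u i) (hneg : ∃ j, u j < 0)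
    (hAu : ∀ i, lam * u i ≤ (A *ᵥ u) i) :
    {S : Set (Fin n) | IsPosWeakNodalDomain (matGraph A) u S}.ncard ≤
      (Finset.univ.filter (fun i => lam < hA.eigenvalues i)).card :=
  pos_weak_nodal_domains_bound_general A hA hnonneg hconn lam u hneg hAu
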